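/- arXiv:2103.08363 — 6 statements merged into one kernel-verified Lean document; each statement's English description precedes it below -/
import Mathlib

section
/- The function f(z) = (2e^{3z+2} + 3e^{-(3z+2)})/2 satisfies f(z)^2 - (1/36)(f'(z+c) - f'(z))^2 = 6 for all z ∈ ℂ, where c = πi. -/
/-! With `w = 3z + 2` we have `f = e^w + (3/2)e^{-w}` and `f' = 3(e^w - (3/2)e^{-w})`.
Shifting `z` by `πi` shifts `w` by `3πi`, an odd multiple of `πi`, so `f` and hence `f'` are
antiperiodic with antiperiod `c`. Thus `(f'(z+c) - f'(z))² / 36 = (f'(z)/3)²`, and the claim is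
`(A + B)² - (A - B)² = 4AB` with `AB = (3/2)e^w e^{-w} = 3/2`. -/

open Complex

theorem Function.Antiperiodic.deriv {𝕜 F : Type*} [NontriviallyNormedField 𝕜]
    [NormedAddCommGroup F] [NormedSpace 𝕜 F] {f : 𝕜 → F} {c : 𝕜}
    (h : Function.Antiperiodic f c) : Function.Antiperiodic (deriv f) c := by
  intro x
  rw [← deriv_comp_add_const, show (fun x ↦ f (x + c)) = -f from funext h, deriv.neg]

theorem Complex.exp_add_odd_mul_pi_mul_I {n : ℕ} (hn : Odd n) (w : ℂ) :
    exp (w + n * (Real.pi * I)) = -exp w := by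
  obtain ⟨k, rfl⟩ := hn
  rw [show ((2 * k + 1 : ℕ) : ℂ) * (Real.pi * I) = k * (2 * (Real.pi * I)) + Real.pi * I by
    push_cast; ring]
  exact exp_antiperiodic.nat_odd_mul_antiperiodic k w

theorem stmt_0 (f : ℂ → ℂ)
    (hf : ∀ z : ℂ, f z = (2 * Complex.exp (3 * z + 2) + 3 * Complex.exp (-(3 * z + 2))) / 2)
    (c : ℂ) (hc : c = Real.pi * Complex.I) :
    ∀ z : ℂ, (f z) ^ 2 - (1 / 36) * (deriv f (z + c) - deriv f z) ^ 2 = 6 := by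
  have exp_shift (w : ℂ) : exp (w + 3 * (Real.pi * I)) = -exp w := by
    exact_mod_cast exp_add_odd_mul_pi_mul_I (n := 3) (by decide) w
  have hf_antiperiodic : Function.Antiperiodic f c := by
    intro z
    rw [hf, hf, hc, show 3 * (z + Real.pi * I) + 2 = 3 * z + 2 + 3 * (Real.pi * I) by ring,
      exp_neg, exp_shift, inv_neg, ← exp_neg]
    ring
  have hderiv (z : ℂ) :
      deriv f z = 3 * (exp (3 * z + 2) - 3 / 2 * exp (-(3 * z + 2))) := by
    have hw : HasDerivAt (fun z : ℂ ↦ 3 * z + 2) 3 z := by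
      simpa using ((hasDerivAt_id z).const_mul (3 : ℂ)).add_const 2
    have hf' : HasDerivAt f
        ((2 * (exp (3 * z + 2) * 3) + 3 * (exp (-(3 * z + 2)) * -3)) / 2) z := by
      rw [show f = _ from funext hf]
      exact ((hw.cexp.const_mul 2).add (hw.neg.cexp.const_mul 3)).div_const 2
    rw [hf'.deriv]
    ring
  intro z
  have hexp : exp (3 * z + 2) * exp (-(3 * z + 2)) = 1 := by
    rw [← exp_add, add_neg_cancel, exp_zero]
  rw [hf_antiperiodic.deriv, hderiv, hf]
  linear_combination 6 * hexp
end

section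
/- Let α, β ∈ ℂ \ {0}, a, b, c ∈ ℂ with a ≠ 0, c ≠ 0, and e^{ac} = 1. Then the function f(z) = (αz·e^{az+b} + βz·e^{-(az+b)})/2 satisfies f(z)^2 - (z^2/(a^2c^2))(f'(z+c) - f'(z))^2 = αβz^2 for all z ∈ ℂ. -/
/-! Write `E = exp (a z + b)`. Since `exp (a c) = 1`, `E` is `c`-periodic, so in
`f' z = (α E + β E⁻¹) / 2 + a z (α E - β E⁻¹) / 2` only the second summand changes under
`z ↦ z + c`, and `f' (z + c) - f' z = a c (α E - β E⁻¹) / 2`. The claim becomes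
`z² ((α E + β E⁻¹)² - (α E - β E⁻¹)²) / 4 = α β z²`. -/

open Complex

lemma exp_mul_add_add_period {a c : ℂ} (hac : exp (a * c) = 1) (z b : ℂ) :
    exp (a * (z + c) + b) = exp (a * z + b) := by
  rw [mul_add, add_right_comm, exp_add, hac, mul_one]

lemma hasDerivAt_mul_exp_add_mul_exp_neg (α β a b w : ℂ) :
    HasDerivAt (fun z => (α * z * exp (a * z + b) + β * z * exp (-(a * z + b))) / 2)
      ((α * exp (a * w + b) + β * exp (-(a * w + b))) / 2
        + a * w * (α * exp (a * w + b) - β * exp (-(a * w + b))) / 2) w := by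
  have hlin : HasDerivAt (fun z => a * z + b) a w := by
    simpa using ((hasDerivAt_id w).const_mul a).add_const b
  have hpos := ((hasDerivAt_id' w).mul hlin.cexp).const_mul α
  have hneg := ((hasDerivAt_id' w).mul hlin.neg.cexp).const_mul β
  have hfun : (fun z => (α * z * exp (a * z + b) + β * z * exp (-(a * z + b))) / 2)
      = fun z => (α * (z * exp (a * z + b)) + β * (z * exp (-(a * z + b)))) / 2 := by
    funext z; ring
  rw [hfun]
  exact ((hpos.add hneg).div_const 2).congr_deriv (by simp only [Pi.neg_apply]; ring)

theorem stmt_1_general (α β a b c : ℂ) (ha : a ≠ 0) (hc : c ≠ 0)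
    (hac : Complex.exp (a * c) = 1) (f : ℂ → ℂ)
    (hf : ∀ z : ℂ, f z = (α * z * Complex.exp (a * z + b) + β * z * Complex.exp (-(a * z + b))) / 2) :
    ∀ z : ℂ, (f z) ^ 2 - (z ^ 2 / (a ^ 2 * c ^ 2)) * (deriv f (z + c) - deriv f z) ^ 2
      = α * β * z ^ 2 := by
  intro z
  have hderiv (w : ℂ) := (funext hf ▸ hasDerivAt_mul_exp_add_mul_exp_neg α β a b w).deriv
  have hdiff : deriv f (z + c) - deriv f z
      = a * c * (α * exp (a * z + b) - β * exp (-(a * z + b))) / 2 := by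
    simp only [hderiv, exp_neg, exp_mul_add_add_period hac]
    ring
  rw [hf, hdiff, exp_neg]
  field_simp [exp_ne_zero]
  ring

theorem stmt_1 (α β a b c : ℂ) (hα : α ≠ 0) (hβ : β ≠ 0) (ha : a ≠ 0) (hc : c ≠ 0)
    (hac : Complex.exp (a * c) = 1) (f : ℂ → ℂ)
    (hf : ∀ z : ℂ, f z = (α * z * Complex.exp (a * z + b) + β * z * Complex.exp (-(a * z + b))) / 2) :
    ∀ z : ℂ, (f z) ^ 2 - (z ^ 2 / (a ^ 2 * c ^ 2)) * (deriv f (z + c) - deriv f z) ^ 2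
      = α * β * z ^ 2 :=
  stmt_1_general α β a b c ha hc hac f hf
end

section
/- The function f(z) = (e^{2z+3} + e^{-(2z+3)})/2 satisfies f(z)^2 - (1/2^7)(f''(z+c) + 3f''(z))^2 = 1 for all z ∈ ℂ, whenever c ∈ ℂ satisfies e^{2c} = -3 + 2√2. -/
/-!
Here `f = cosh (2z + 3)`, so `f'' = 4 f`. The value of `exp (2c)` makes `cosh (2c) = -3` and
`sinh (2c) = 2√2`, so by the addition formula `f''(z + c) + 3 f''(z) = 8√2 sinh (2z + 3)`,
and the identity becomes `cosh² - sinh² = 1`.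
-/

open Complex

theorem hasDerivAt_cosh_mul_add (a b z : ℂ) :
    HasDerivAt (fun z => cosh (a * z + b)) (a * sinh (a * z + b)) z := by
  simpa [mul_comm] using (((hasDerivAt_id z).const_mul a).add_const b).ccosh

theorem hasDerivAt_sinh_mul_add (a b z : ℂ) :
    HasDerivAt (fun z => sinh (a * z + b)) (a * cosh (a * z + b)) z := by
  simpa [mul_comm] using (((hasDerivAt_id z).const_mul a).add_const b).csinh

theorem iteratedDeriv_two_cosh_mul_add (a b z : ℂ) :
    iteratedDeriv 2 (fun z => cosh (a * z + b)) z = a ^ 2 * cosh (a * z + b) := by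
  have hderiv : deriv (fun z => cosh (a * z + b)) = fun z => a * sinh (a * z + b) :=
    funext fun w => (hasDerivAt_cosh_mul_add a b w).deriv
  rw [iteratedDeriv_succ, iteratedDeriv_one, hderiv,
    ((hasDerivAt_sinh_mul_add a b z).const_mul a).deriv]
  ring

theorem sq_ofReal_sqrt_two : ((Real.sqrt 2 : ℝ) : ℂ) ^ 2 = 2 := by
  norm_cast
  simp

theorem cosh_eq_and_sinh_eq_of_exp_eq {v : ℂ} (hv : exp v = -3 + 2 * Real.sqrt 2) :
    cosh v = -3 ∧ sinh v = 2 * Real.sqrt 2 := by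
  have hinv : exp (-v) = -3 - 2 * Real.sqrt 2 := by
    rw [exp_neg, hv]
    exact inv_eq_of_mul_eq_one_right (by linear_combination (-4 : ℂ) * sq_ofReal_sqrt_two)
  exact ⟨by rw [cosh, hv, hinv]; ring, by rw [sinh, hv, hinv]; ring⟩

theorem sq_cosh_add_add_three_mul_cosh {v : ℂ} (hv : exp v = -3 + 2 * Real.sqrt 2) (u : ℂ) :
    (cosh (u + v) + 3 * cosh u) ^ 2 = 8 * sinh u ^ 2 := by
  obtain ⟨hcosh, hsinh⟩ := cosh_eq_and_sinh_eq_of_exp_eq hv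
  rw [cosh_add, hcosh, hsinh]
  linear_combination 4 * sinh u ^ 2 * sq_ofReal_sqrt_two

theorem stmt_2 (f : ℂ → ℂ)
    (hf : ∀ z : ℂ, f z = (Complex.exp (2 * z + 3) + Complex.exp (-(2 * z + 3))) / 2)
    (c : ℂ) (hc : Complex.exp (2 * c) = -3 + 2 * Real.sqrt 2) :
    ∀ z : ℂ, (f z) ^ 2
      - (1 / 2 ^ 7) * (iteratedDeriv 2 f (z + c) + 3 * iteratedDeriv 2 f z) ^ 2 = 1 := by
  intro z
  obtain rfl : f = fun z => cosh (2 * z + 3) := funext fun w => by rw [hf, cosh]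
  have hshift : 2 * (z + c) + 3 = (2 * z + 3) + 2 * c := by ring
  rw [iteratedDeriv_two_cosh_mul_add, iteratedDeriv_two_cosh_mul_add, hshift]
  linear_combination cosh_sq_sub_sinh_sq (2 * z + 3)
    - (1 / 8 : ℂ) * sq_cosh_add_add_three_mul_cosh hc (2 * z + 3)
end

section
/- The function f(z) = (e^{3z+4} + e^{-(3z+4)})/2 satisfies f(z)^2 - (1/144)(5f'(z+c) + f'''(z))^2 = 1 for all z ∈ ℂ, whenever c ∈ ℂ satisfies e^{3c} = -1. -/
/-! `f z = cosh (3z + 4)`, so `f' = 3 sinh (3z + 4)` and `f''' = 27 sinh (3z + 4)`. From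
`exp (3c) = -1` we get `cosh (3c) = -1` and `sinh (3c) = 0`, so the shift by `c` flips the sign of
`f'`; hence `5 f'(z + c) + f'''(z) = 12 sinh (3z + 4)` and the identity is `cosh² - sinh² = 1`. -/

open Complex

theorem deriv_const_mul_cosh_mul_add (k a b : ℂ) :
    deriv (fun z => k * cosh (a * z + b)) = fun z => k * a * sinh (a * z + b) := by
  funext z
  have h := (((hasDerivAt_id' z).const_mul a).add_const b).ccosh.const_mul k
  rw [h.deriv]; ring

theorem deriv_const_mul_sinh_mul_add (k a b : ℂ) :
    deriv (fun z => k * sinh (a * z + b)) = fun z => k * a * cosh (a * z + b) := by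
  funext z
  have h := (((hasDerivAt_id' z).const_mul a).add_const b).csinh.const_mul k
  rw [h.deriv]; ring

theorem deriv_cosh_mul_add (a b : ℂ) :
    deriv (fun z => cosh (a * z + b)) = fun z => a * sinh (a * z + b) := by
  simpa only [one_mul] using deriv_const_mul_cosh_mul_add 1 a b

theorem iteratedDeriv_three_cosh_mul_add (a b : ℂ) :
    iteratedDeriv 3 (fun z => cosh (a * z + b)) = fun z => a ^ 3 * sinh (a * z + b) := by
  rw [iteratedDeriv_succ, iteratedDeriv_succ, iteratedDeriv_one, deriv_cosh_mul_add,
    deriv_const_mul_sinh_mul_add, deriv_const_mul_cosh_mul_add]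
  ring_nf

theorem sinh_add_of_exp_eq_neg_one {w : ℂ} (hw : exp w = -1) (u : ℂ) :
    sinh (u + w) = -sinh u := by
  have hw' : exp (-w) = -1 := by rw [exp_neg, hw]; norm_num
  have hcosh : cosh w = -1 := by rw [← mul_right_inj' two_ne_zero, two_cosh, hw, hw']; ring
  have hsinh : sinh w = 0 := by rw [← mul_right_inj' two_ne_zero, two_sinh, hw, hw']; ring
  rw [sinh_add, hcosh, hsinh]; ring

theorem stmt_3 (f : ℂ → ℂ)
    (hf : ∀ z : ℂ, f z = (Complex.exp (3 * z + 4) + Complex.exp (-(3 * z + 4))) / 2)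
    (c : ℂ) (hc : Complex.exp (3 * c) = -1) :
    ∀ z : ℂ, (f z) ^ 2
      - (1 / 144) * (5 * deriv f (z + c) + iteratedDeriv 3 f z) ^ 2 = 1 := by
  have hf_cosh : f = fun z => cosh (3 * z + 4) := by
    funext z; rw [hf z, cosh]
  intro z
  have hshift : sinh (3 * (z + c) + 4) = -sinh (3 * z + 4) := by
    rw [show 3 * (z + c) + 4 = 3 * z + 4 + 3 * c by ring, sinh_add_of_exp_eq_neg_one hc]
  rw [hf_cosh, deriv_cosh_mul_add, iteratedDeriv_three_cosh_mul_add]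
  beta_reduce
  rw [hshift]
  linear_combination cosh_sq_sub_sinh_sq (3 * z + 4)
end

section
/- The function f(z) = (e^{z+2} + e^{-(z+2)})/2 satisfies f(z)^2 - (1/(8+6i))(f''(z+c) + 3f'''(z))^2 = 1 for all z ∈ ℂ, whenever c ∈ ℂ satisfies e^c = i. -/
open Complex

/-! Here `f = cosh (· + 2)`, so `f'' = f` and `f''' = sinh (· + 2)`. Since `e^c = i` gives
`cosh (w + c) = i sinh w`, the bracket is `(3 + i) sinh (z + 2)`, and `(3 + i)² = 8 + 6i`
reduces the identity to `cosh² - sinh² = 1`. -/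

theorem Complex.cosh_add_of_exp_eq_I {c : ℂ} (hc : exp c = I) (w : ℂ) :
    cosh (w + c) = I * sinh w := by
  have hcosh : cosh c = 0 := by simp [cosh, exp_neg, hc]
  have hsinh : sinh c = I := by
    rw [sinh, exp_neg, hc, inv_I]
    ring
  rw [cosh_add, hcosh, hsinh]
  ring

theorem stmt_4 (f : ℂ → ℂ)
    (hf : ∀ z : ℂ, f z = (Complex.exp (z + 2) + Complex.exp (-(z + 2))) / 2)
    (c : ℂ) (hc : Complex.exp c = Complex.I) :
    ∀ z : ℂ, (f z) ^ 2
      - (1 / (8 + 6 * Complex.I)) * (iteratedDeriv 2 f (z + c) + 3 * iteratedDeriv 3 f z) ^ 2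
      = 1 := by
  obtain rfl : f = fun z ↦ cosh (z + 2) := funext fun z ↦ hf z
  intro z
  have h2 : iteratedDeriv 2 cosh = cosh := iteratedDeriv_even_cosh 1
  have h3 : iteratedDeriv 3 cosh = sinh := iteratedDeriv_odd_cosh 1
  have hshift : cosh (z + c + 2) = I * sinh (z + 2) := by
    rw [add_right_comm, cosh_add_of_exp_eq_I hc]
  have hsq : (I * sinh (z + 2) + 3 * sinh (z + 2)) ^ 2 = (8 + 6 * I) * sinh (z + 2) ^ 2 := by
    linear_combination sinh (z + 2) ^ 2 * I_sq
  have hne : (8 + 6 * I : ℂ) ≠ 0 := by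
    intro h
    simpa using congrArg re h
  simp only [iteratedDeriv_comp_add_const, h2, h3]
  rw [hshift, hsq, one_div, inv_mul_cancel_left₀ hne, cosh_sq_sub_sinh_sq]
end

section
/- Let Q_1, Q_2 be nonzero complex constants, a, b, c, R ∈ ℂ with a, R ≠ 0, k odd, e^{ac} = -1, and 2iRa^k + 1 = 0. Then f(z) = (Q_1 e^{az+b} + Q_2 e^{-(az+b)})/2 satisfies f(z)^2 + R^2(f^{(k)}(z+c) - f^{(k)}(z))^2 = Q_1 Q_2 for all z ∈ ℂ. -/
open Complex

/-
With w = a z + b, the k-th derivative of f is a^k (Q₁ e^w - Q₂ e^{-w}) / 2 because k is odd, and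
e^{ac} = -1 makes it change sign under z ↦ z + c. Hence R (f^{(k)}(z+c) - f^{(k)}(z)) equals
-R a^k (Q₁ e^w - Q₂ e^{-w}) = (Q₁ e^w - Q₂ e^{-w}) / (2i), and the claim becomes the identity
(Q₁ e^w + Q₂ e^{-w})² - (Q₁ e^w - Q₂ e^{-w})² = 4 Q₁ Q₂, a form of cosh² - sinh² = 1.
-/

theorem iteratedDeriv_cexp_mul_add (n : ℕ) (a b : ℂ) :
    iteratedDeriv n (fun z => exp (a * z + b)) = fun z => a ^ n * exp (a * z + b) := by
  funext z
  simp only [exp_add, mul_comm _ (exp b), iteratedDeriv_const_mul_field,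
    iteratedDeriv_cexp_const_mul]
  ring

theorem iteratedDeriv_cexp_combination (n : ℕ) (Q₁ Q₂ a b z : ℂ) :
    iteratedDeriv n (fun z => (Q₁ * exp (a * z + b) + Q₂ * exp (-(a * z + b))) / 2) z
      = (Q₁ * a ^ n * exp (a * z + b) + Q₂ * (-a) ^ n * exp (-(a * z + b))) / 2 := by
  have hneg : ∀ z, -(a * z + b) = -a * z + -b := fun z => by ring
  have hsmooth : ∀ (a b C : ℂ), ContDiffAt ℂ n (fun z => C * exp (a * z + b)) z := by
    intro a b C; fun_prop
  simp only [div_eq_mul_inv _ (2 : ℂ), mul_comm _ (2 : ℂ)⁻¹, iteratedDeriv_const_mul_field, hneg]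
  rw [iteratedDeriv_fun_add (hsmooth a b Q₁) (hsmooth (-a) (-b) Q₂),
    iteratedDeriv_const_mul_field, iteratedDeriv_const_mul_field,
    iteratedDeriv_cexp_mul_add, iteratedDeriv_cexp_mul_add]
  ring

theorem stmt_17_general (Q₁ Q₂ a b c R : ℂ)
    (k : ℕ) (hk : Odd k) (hac : Complex.exp (a * c) = -1)
    (hRa : 2 * Complex.I * R * a ^ k + 1 = 0) (f : ℂ → ℂ)
    (hf : ∀ z : ℂ, f z = (Q₁ * Complex.exp (a * z + b) + Q₂ * Complex.exp (-(a * z + b))) / 2) :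
    ∀ z : ℂ, (f z) ^ 2 + R ^ 2 * (iteratedDeriv k f (z + c) - iteratedDeriv k f z) ^ 2
      = Q₁ * Q₂ := by
  intro z
  obtain rfl : f = _ := funext hf
  have hshift : exp (a * (z + c) + b) = -exp (a * z + b) := by
    rw [show a * (z + c) + b = a * z + b + a * c by ring, exp_add, hac, mul_neg_one]
  have hshift_neg : exp (-(a * (z + c) + b)) = -exp (-(a * z + b)) := by
    rw [exp_neg, hshift, inv_neg, exp_neg]
  have hinv : exp (a * z + b) * exp (-(a * z + b)) = 1 := by
    rw [← exp_add, add_neg_cancel, exp_zero]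
  have hRa_sq : R ^ 2 * (a ^ k) ^ 2 = -1 / 4 := by
    linear_combination (-1 / 4 : ℂ) * (2 * I * R * a ^ k - 1) * hRa + R ^ 2 * (a ^ k) ^ 2 * I_sq
  simp only [iteratedDeriv_cexp_combination, hshift, hshift_neg, hk.neg_pow]
  linear_combination (Q₁ * exp (a * z + b) - Q₂ * exp (-(a * z + b))) ^ 2 * hRa_sq + Q₁ * Q₂ * hinv

theorem stmt_17 (Q₁ Q₂ a b c R : ℂ) (hQ₁ : Q₁ ≠ 0) (hQ₂ : Q₂ ≠ 0) (ha : a ≠ 0) (hR : R ≠ 0)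
    (k : ℕ) (hk : Odd k) (hac : Complex.exp (a * c) = -1)
    (hRa : 2 * Complex.I * R * a ^ k + 1 = 0) (f : ℂ → ℂ)
    (hf : ∀ z : ℂ, f z = (Q₁ * Complex.exp (a * z + b) + Q₂ * Complex.exp (-(a * z + b))) / 2) :
    ∀ z : ℂ, (f z) ^ 2 + R ^ 2 * (iteratedDeriv k f (z + c) - iteratedDeriv k f z) ^ 2
      = Q₁ * Q₂ :=
  stmt_17_general Q₁ Q₂ a b c R k hk hac hRa f hf
end
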